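/- Let G be a simple graph, u, v adjacent vertices of G, and G' = G[u→v] the graph obtained by the Kelmans operation. If G' contains a path on k vertices, then G contains a path on at least k vertices. -/

import Mathlib

/-- The Kelmans operation `G[u → v]`: every edge `wu` with `w ∈ N(u) \\ N[v]` is removed
and replaced by the edge `wv`. -/
def kelmans {V : Type*} (G : SimpleGraph V) (u v : V) : SimpleGraph V where
  Adj x y := x ≠ y ∧
    ((G.Adj x y ∧ ¬ ((x = u ∧ G.Adj u y ∧ ¬ G.Adj v y ∧ y ≠ v) ∨
                     (y = u ∧ G.Adj u x ∧ ¬ G.Adj v x ∧ x ≠ v))) ∨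
     ((x = v ∧ G.Adj u y ∧ ¬ G.Adj v y ∧ y ≠ v) ∨
      (y = v ∧ G.Adj u x ∧ ¬ G.Adj v x ∧ x ≠ v)))
  symm := by
    refine ⟨?_⟩
    rintro x y ⟨hxy, h⟩
    refine ⟨hxy.symm, ?_⟩
    have hsymm : G.Adj x y ↔ G.Adj y x := ⟨SimpleGraph.Adj.symm, SimpleGraph.Adj.symm⟩
    tauto
  loopless := by refine ⟨?_⟩; rintro x ⟨h, -⟩; exact h rfl

/-
In `G[u → v]` only the edges at `v` can be missing from `G`: an edge `ux` with `x ≠ v` forces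
`x` to be a common neighbour of `u` and `v`, and every neighbour of `v` is a `G`-neighbour of
`u` or of `v`. So a path `P` of `G[u → v]` through `v` is a path of `G` except possibly at the
(at most two) edges of `v`, and it is repaired by rearranging `u` and `v`. If `u ∉ P`, replace
`v` by `u`, `uv` or `vu` as the two neighbours of `v` on `P` require. If `P = X u Z v Y`, the
vertices of `X` and `Z` next to `u` are common neighbours, so one of `X u Z v Y`, `X v Z u Y`,
`X u Zᴿ v Y`, `X v Zᴿ u Y` is a path of `G` on the same vertices.
-/

open List

section

variable {V : Type*} {G : SimpleGraph V} {u v : V}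

theorem adj_of_kelmans_adj {x y : V} (h : (kelmans G u v).Adj x y) (hx : x ≠ v) (hy : y ≠ v) :
    G.Adj x y := by
  simp only [kelmans] at h
  tauto

theorem adj_of_kelmans_adj_source {x : V} (h : (kelmans G u v).Adj u x) (hx : x ≠ v) :
    G.Adj u x ∧ G.Adj v x := by
  simp only [kelmans] at h
  grind

theorem adj_of_kelmans_adj_target {x : V} (h : (kelmans G u v).Adj v x) :
    G.Adj v x ∨ G.Adj u x := by
  simp only [kelmans] at h
  tauto

theorem SimpleGraph.isChain_adj_reverse {H : SimpleGraph V} {l : List V} :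
    l.reverse.IsChain H.Adj ↔ l.IsChain H.Adj := by
  simp only [isChain_reverse, H.adj_comm]

theorem SimpleGraph.exists_perm_isChain_cons_append_singleton {a b z : V} {Z : List V}
    (ha : G.Adj a z) (hb : G.Adj b z)
    (h : (z :: Z ++ [a]).IsChain G.Adj ∨ (z :: Z ++ [b]).IsChain G.Adj) :
    ∃ Z', Z' ~ z :: Z ∧ (a :: (Z' ++ [b])).IsChain G.Adj := by
  rcases h with h | h
  · refine ⟨(z :: Z).reverse, reverse_perm _, ?_⟩
    rw [← isChain_adj_reverse]
    simpa using isChain_cons_cons.2 ⟨hb, h⟩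
  · exact ⟨z :: Z, Perm.refl _, isChain_cons_cons.2 ⟨ha, h⟩⟩

theorem isChain_of_isChain_kelmans {l : List V} (h : l.IsChain (kelmans G u v).Adj)
    (hv : v ∉ l) : l.IsChain G.Adj :=
  h.imp_of_mem_imp fun _ _ ha hb hab =>
    adj_of_kelmans_adj hab (ne_of_mem_of_not_mem ha hv) (ne_of_mem_of_not_mem hb hv)

theorem isChain_cons_of_isChain_kelmans_source {Y : List V} {c : V}
    (h : (u :: Y).IsChain (kelmans G u v).Adj) (hv : v ∉ Y) (hc : c = u ∨ c = v) :
    (c :: Y).IsChain G.Adj := by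
  cases Y with
  | nil => exact isChain_singleton c
  | cons y Y =>
    obtain ⟨hvy, hvY⟩ := not_or.1 (mem_cons.not.1 hv)
    rw [isChain_cons_cons] at h ⊢
    refine ⟨?_, isChain_of_isChain_kelmans h.2 (by simp [hvy, hvY])⟩
    have hy := adj_of_kelmans_adj_source h.1 (Ne.symm hvy)
    rcases hc with rfl | rfl
    exacts [hy.1, hy.2]

theorem exists_isChain_cons_of_isChain_kelmans_target {Y : List V}
    (h : (v :: Y).IsChain (kelmans G u v).Adj) (hv : v ∉ Y) :
    ∃ c, (c = u ∨ c = v) ∧ (c :: Y).IsChain G.Adj := by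
  cases Y with
  | nil => exact ⟨v, .inr rfl, isChain_singleton v⟩
  | cons y Y =>
    rw [isChain_cons_cons] at h
    have hY := isChain_of_isChain_kelmans h.2 hv
    rcases adj_of_kelmans_adj_target h.1 with hvy | huy
    exacts [⟨v, .inr rfl, isChain_cons_cons.2 ⟨hvy, hY⟩⟩,
      ⟨u, .inl rfl, isChain_cons_cons.2 ⟨huy, hY⟩⟩]

theorem isChain_append_singleton_of_isChain_kelmans_source {X : List V} {c : V}
    (h : (X ++ [u]).IsChain (kelmans G u v).Adj) (hv : v ∉ X) (hc : c = u ∨ c = v) :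
    (X ++ [c]).IsChain G.Adj := by
  rw [← SimpleGraph.isChain_adj_reverse, reverse_append, reverse_singleton, singleton_append]
    at h ⊢
  exact isChain_cons_of_isChain_kelmans_source h (by simpa using hv) hc

theorem exists_isChain_append_singleton_of_isChain_kelmans_target {X : List V}
    (h : (X ++ [v]).IsChain (kelmans G u v).Adj) (hv : v ∉ X) :
    ∃ c, (c = u ∨ c = v) ∧ (X ++ [c]).IsChain G.Adj := by
  rw [← SimpleGraph.isChain_adj_reverse, reverse_append, reverse_singleton, singleton_append]
    at h
  simp_rw [← SimpleGraph.isChain_adj_reverse (l := X ++ _), reverse_append, reverse_singleton,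
    singleton_append]
  exact exists_isChain_cons_of_isChain_kelmans_target h (by simpa using hv)

theorem exists_perm_isChain_of_isChain_kelmans_cons_append (huv : G.Adj u v) {Z : List V}
    (h : (u :: (Z ++ [v])).IsChain (kelmans G u v).Adj) (hv : v ∉ Z) {c c' : V}
    (hcc' : c = u ∧ c' = v ∨ c = v ∧ c' = u) :
    ∃ Z', Z' ~ Z ∧ (c' :: (Z' ++ [c])).IsChain G.Adj := by
  cases Z with
  | nil =>
    refine ⟨[], Perm.refl _, isChain_pair.2 ?_⟩
    rcases hcc' with ⟨rfl, rfl⟩ | ⟨rfl, rfl⟩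
    exacts [huv.symm, huv]
  | cons z Z =>
    rw [cons_append, isChain_cons_cons] at h
    obtain ⟨huz, hvz⟩ := adj_of_kelmans_adj_source h.1 (ne_of_mem_of_not_mem mem_cons_self hv)
    obtain ⟨d, hd, hZd⟩ := exists_isChain_append_singleton_of_isChain_kelmans_target h.2 hv
    apply SimpleGraph.exists_perm_isChain_cons_append_singleton <;>
      rcases hcc' with ⟨rfl, rfl⟩ | ⟨rfl, rfl⟩ <;> rcases hd with rfl | rfl <;> simp_all

theorem exists_perm_isChain_of_isChain_kelmans_source_before_target (huv : G.Adj u v)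
    {X Z Y : List V} (h : (X ++ u :: (Z ++ v :: Y)).IsChain (kelmans G u v).Adj)
    (hnd : (X ++ u :: (Z ++ v :: Y)).Nodup) :
    ∃ l', l' ~ X ++ u :: (Z ++ v :: Y) ∧ l'.IsChain G.Adj := by
  have hv : v ∉ X ∧ v ∉ Z ∧ v ∉ Y := by
    rw [← cons_append, ← append_assoc, nodup_middle, nodup_cons] at hnd
    simp_all
  rw [isChain_split, isChain_cons_split] at h
  obtain ⟨hX, hZ, hY⟩ := h
  obtain ⟨c, hc, hcY⟩ := exists_isChain_cons_of_isChain_kelmans_target hY hv.2.2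
  obtain ⟨c', hcc'⟩ : ∃ c', c = u ∧ c' = v ∨ c = v ∧ c' = u := by
    rcases hc with rfl | rfl
    exacts [⟨v, .inl ⟨rfl, rfl⟩⟩, ⟨u, .inr ⟨rfl, rfl⟩⟩]
  obtain ⟨Z', hZ', hZc⟩ := exists_perm_isChain_of_isChain_kelmans_cons_append huv hZ hv.2.1 hcc'
  have hXc' := isChain_append_singleton_of_isChain_kelmans_source hX hv.1 (c := c') (by tauto)
  refine ⟨X ++ c' :: (Z' ++ c :: Y), ?_, ?_⟩
  · classical
    rcases hcc' with ⟨rfl, rfl⟩ | ⟨rfl, rfl⟩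
    · rw [perm_iff_count]
      intro a
      simp only [count_append, count_cons, hZ'.count_eq]
      omega
    · exact ((hZ'.append_right _).cons _).append_left _
  · rw [isChain_split, isChain_cons_split]
    exact ⟨hXc', hZc, hcY⟩

theorem exists_isChain_of_isChain_kelmans_source_not_mem (huv : G.Adj u v) {X Y : List V}
    (h : (X ++ v :: Y).IsChain (kelmans G u v).Adj) (hnd : (X ++ v :: Y).Nodup)
    (hu : u ∉ X ++ v :: Y) :
    ∃ l : List V, l.IsChain G.Adj ∧ l.Nodup ∧ (X ++ v :: Y).length ≤ l.length := by
  have hv : v ∉ X ∧ v ∉ Y := by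
    rw [nodup_middle, nodup_cons] at hnd
    simp_all
  rw [isChain_split] at h
  obtain ⟨c', hc', hXc'⟩ := exists_isChain_append_singleton_of_isChain_kelmans_target h.1 hv.1
  obtain ⟨c, hc, hcY⟩ := exists_isChain_cons_of_isChain_kelmans_target h.2 hv.2
  by_cases hcc' : c' = c
  · subst hcc'
    refine ⟨X ++ c' :: Y, isChain_split.2 ⟨hXc', hcY⟩, ?_, by simp⟩
    rw [nodup_middle, nodup_cons] at hnd ⊢
    rcases hc with rfl | rfl
    exacts [⟨by simp_all, hnd.2⟩, hnd]
  · refine ⟨X ++ c' :: c :: Y, isChain_append_cons_cons.2 ⟨hXc', ?_, hcY⟩, ?_, by simp⟩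
    · rcases hc' with rfl | rfl <;> rcases hc with rfl | rfl
      exacts [absurd rfl hcc', huv, huv.symm, absurd rfl hcc']
    · rw [nodup_middle, nodup_cons] at hnd
      rw [nodup_middle, nodup_cons, nodup_middle, nodup_cons]
      rcases hc' with rfl | rfl <;> rcases hc with rfl | rfl <;> simp_all

theorem exists_isChain_of_isChain_kelmans (huv : G.Adj u v) {l : List V}
    (h : l.IsChain (kelmans G u v).Adj) (hnd : l.Nodup) :
    ∃ l' : List V, l'.IsChain G.Adj ∧ l'.Nodup ∧ l.length ≤ l'.length := by
  by_cases hv : v ∈ l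
  swap
  · exact ⟨l, isChain_of_isChain_kelmans h hv, hnd, le_rfl⟩
  obtain ⟨X, Y, rfl⟩ := append_of_mem hv
  by_cases hu : u ∈ X ++ v :: Y
  swap
  · exact exists_isChain_of_isChain_kelmans_source_not_mem huv h hnd hu
  rcases mem_append.1 hu with huX | huY
  · obtain ⟨X, Z, rfl⟩ := append_of_mem huX
    obtain ⟨l', hl', hl'G⟩ := exists_perm_isChain_of_isChain_kelmans_source_before_target huv
      (X := X) (Z := Z) (Y := Y) (by simpa using h) (by simpa using hnd)
    exact ⟨l', hl'G, hl'.nodup_iff.2 (by simpa using hnd), by simp [hl'.length_eq]⟩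
  · obtain ⟨Z, Y, rfl⟩ := append_of_mem ((mem_cons.1 huY).resolve_left huv.ne)
    have hrev : (X ++ v :: (Z ++ u :: Y)).reverse =
        Y.reverse ++ u :: (Z.reverse ++ v :: X.reverse) := by simp
    obtain ⟨l', hl', hl'G⟩ := exists_perm_isChain_of_isChain_kelmans_source_before_target huv
      (hrev ▸ SimpleGraph.isChain_adj_reverse.2 h) (hrev ▸ nodup_reverse.2 hnd)
    rw [← hrev] at hl'
    exact ⟨l', hl'G, hl'.nodup_iff.2 (nodup_reverse.2 hnd),
      (hl'.length_eq.trans length_reverse).ge⟩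

end

/-- If `u` and `v` are adjacent and `G[u → v]` contains a path on `k` vertices,
then `G` contains a path on at least `k` vertices. -/
theorem stmt_5 {V : Type*} (G : SimpleGraph V) (u v : V) (huv : G.Adj u v) (k : ℕ)
    (h : ∃ (a b : V) (w : (kelmans G u v).Walk a b), w.IsPath ∧ w.length + 1 = k) :
    ∃ (a b : V) (w : G.Walk a b), w.IsPath ∧ k ≤ w.length + 1 := by
  obtain ⟨a, b, p, hp, rfl⟩ := h
  obtain ⟨l, hl, hnd, hlen⟩ :=
    exists_isChain_of_isChain_kelmans huv p.isChain_adj_support hp.support_nodup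
  have hne : l ≠ [] := by
    rintro rfl
    simp at hlen
  refine ⟨_, _, .ofSupport l hne hl, ?_, ?_⟩
  · rw [SimpleGraph.Walk.isPath_def, SimpleGraph.Walk.support_ofSupport]
    exact hnd
  · rw [SimpleGraph.Walk.length_ofSupport, ← p.length_support]
    omega
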